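/- arXiv:1012.0199 — 8 statements merged into one kernel-verified Lean document; each statement's English description precedes it below -/
import Mathlib

section
/- Let μ, c₀, d, h be real numbers with σ > 0 and d + h ≥ 0, and define m := (1/2)·[(1 − 2(μ−c₀)/σ²) + √((1 − 2(μ−c₀)/σ²)² + 8(d+h)/σ²)]. Then m = 1 if and only if μ − h = d + c₀ (the balance condition between the effective growth rate of incumbent firms and the growth rate of investments in entrant firms). -/
open Real

/- `m` is the larger root of the characteristic quadratic `x² - a x - b/4`, with
`a = 1 - 2(μ - c₀)/σ²` and `b = 8(d + h)/σ²`. Since `b ≥ 0` the other root is `≤ 0`, so `m = 1`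
exactly when `1` is a root, i.e. `b = 4(1 - a)`; clearing `σ²` this is `μ - c₀ = d + h`. -/

theorem one_half_mul_add_sqrt_sq_add_eq_one_iff {a b : ℝ} (hb : 0 ≤ b) :
    1 / 2 * (a + √(a ^ 2 + b)) = 1 ↔ b = 4 * (1 - a) := by
  have hsqrt : 1 / 2 * (a + √(a ^ 2 + b)) = 1 ↔ √(a ^ 2 + b) = 2 - a := by
    constructor <;> intro h <;> linarith
  rw [hsqrt]
  constructor
  · intro hroot
    have hsq := Real.sq_sqrt (show 0 ≤ a ^ 2 + b by positivity)
    rw [hroot] at hsq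
    linarith
  · intro hroot
    rw [show a ^ 2 + b = (2 - a) ^ 2 by rw [hroot]; ring, Real.sqrt_sq (by linarith)]

theorem zipf_iff_balance (μ c₀ d h σ : ℝ) (hσ : 0 < σ) (hdh : 0 ≤ d + h)
    (m : ℝ)
    (hm : m = (1/2) * ((1 - 2*(μ - c₀)/σ^2) +
      Real.sqrt ((1 - 2*(μ - c₀)/σ^2)^2 + 8*(d+h)/σ^2))) :
    m = 1 ↔ μ - h = d + c₀ := by
  rw [hm, one_half_mul_add_sqrt_sq_add_eq_one_iff (by positivity)]
  rw [sub_sub_cancel, mul_div_assoc', div_left_inj' (by positivity)]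
  constructor <;> intro hx <;> linarith
end

section
/- Let μ, c₀, d, h be real numbers with σ > 0, d + h ≥ 0, and suppose the growth of the economy is driven by incumbent firms, i.e. μ − h ≥ d + c₀. Define m := (1/2)·[(1 − 2(μ−c₀)/σ²) + √((1 − 2(μ−c₀)/σ²)² + 8(d+h)/σ²)]. Then m ≤ 1, with equality if and only if μ − h = d + c₀ (the balanced growth path). -/
open Real

/-! With `k = 2(μ - c₀)/σ²` and `e = 8(d + h)/σ²` one has `m = ((1 - k) + √((1 - k)² + e)) / 2`.
Since `(1 - k)² + 4k = (1 + k)²`, the bound `e ≤ 4k`, which is the incumbent-driven growth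
condition, gives `√((1 - k)² + e) ≤ 1 + k`, i.e. `m ≤ 1`, with equality exactly when `e = 4k`. -/

theorem sqrt_one_sub_sq_add_le_one_add {k e : ℝ} (hk : -1 ≤ k) (he : e ≤ 4 * k) :
    √((1 - k) ^ 2 + e) ≤ 1 + k :=
  (sqrt_le_left (by linarith)).mpr (by nlinarith)

theorem sqrt_one_sub_sq_add_eq_one_add_iff {k e : ℝ} (hk : -1 ≤ k) (he : 0 ≤ e) :
    √((1 - k) ^ 2 + e) = 1 + k ↔ e = 4 * k := by
  rw [sqrt_eq_iff_eq_sq (by positivity) (by linarith)]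
  constructor <;> intro h <;> nlinarith

theorem incumbent_driven_growth_tail_index_le_one (μ c₀ d h σ : ℝ)
    (hσ : 0 < σ) (hdh : 0 ≤ d + h) (hdrive : d + c₀ ≤ μ - h)
    (m : ℝ)
    (hm : m = (1/2) * ((1 - 2*(μ - c₀)/σ^2) +
      Real.sqrt ((1 - 2*(μ - c₀)/σ^2)^2 + 8*(d+h)/σ^2))) :
    m ≤ 1 ∧ (m = 1 ↔ μ - h = d + c₀) := by
  have hσ2 : 0 < σ ^ 2 := by positivity
  set k := 2 * (μ - c₀) / σ ^ 2
  set e := 8 * (d + h) / σ ^ 2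
  have hgap : e - 4 * k = 8 * ((d + h) - (μ - c₀)) / σ ^ 2 := by ring
  have he : 0 ≤ e := div_nonneg (by linarith) hσ2.le
  have hek : e ≤ 4 * k := by
    have : 8 * ((d + h) - (μ - c₀)) / σ ^ 2 ≤ 0 :=
      div_nonpos_of_nonpos_of_nonneg (by linarith) hσ2.le
    linarith
  have hk : -1 ≤ k := by linarith
  have hm_eq_one : m = 1 ↔ √((1 - k) ^ 2 + e) = 1 + k := by
    rw [hm]
    constructor <;> intro h <;> linarith
  refine ⟨by rw [hm]; linarith [sqrt_one_sub_sq_add_le_one_add hk hek], ?_⟩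
  rw [hm_eq_one, sqrt_one_sub_sq_add_eq_one_add_iff hk he, ← sub_eq_zero, hgap,
    div_eq_zero_iff, or_iff_left hσ2.ne']
  constructor <;> intro h <;> linarith
end

section
/- Fix real numbers c₀, d, h with d + h > 0 and σ > 0. Then the function μ ↦ m(μ) := (1/2)·[(1 − 2(μ−c₀)/σ²) + √((1 − 2(μ−c₀)/σ²)² + 8(d+h)/σ²)] is strictly decreasing on ℝ; that is, the tail index of the firm-size distribution strictly decreases as the expected growth rate μ of incumbent firms increases. -/
/-! Write `a(μ) = 1 - 2(μ - c₀)/σ²`, which strictly decreases in `μ`, and `K = 8(d+h)/σ² > 0`.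
Then `2m = a + √(a² + K)`, and `x ↦ x + √(x² + K)` is strictly increasing because
`√(x² + K) > |x|`: rationalising, the increment over `[x, y]` has the sign of
`√(y² + K) + √(x² + K) + (y + x) > 0`. -/

open Real

lemma strictMono_add_sqrt_sq_add {k : ℝ} (hk : 0 < k) :
    StrictMono fun x : ℝ => x + √(x ^ 2 + k) := by
  intro x y hxy
  have abs_lt_sqrt (z : ℝ) : |z| < √(z ^ 2 + k) :=
    (lt_sqrt (abs_nonneg z)).2 (by rw [sq_abs]; linarith)
  set sx := √(x ^ 2 + k)
  set sy := √(y ^ 2 + k)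
  have hsum : 0 < sy + sx + (y + x) := by
    linarith [abs_lt_sqrt x, abs_lt_sqrt y, neg_abs_le x, neg_abs_le y]
  have hfactor : (y + sy - (x + sx)) * (sy + sx) = (y - x) * (sy + sx + (y + x)) := by
    have hsx : sx ^ 2 = x ^ 2 + k := sq_sqrt (by positivity)
    have hsy : sy ^ 2 = y ^ 2 + k := sq_sqrt (by positivity)
    linear_combination hsy - hsx
  have hpos : 0 < (y + sy - (x + sx)) * (sy + sx) := hfactor ▸ mul_pos (sub_pos.2 hxy) hsum
  exact sub_pos.1 (pos_of_mul_pos_left hpos (by positivity))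

theorem tail_index_strictAnti_in_mu (c₀ d h σ : ℝ) (hσ : 0 < σ)
    (hdh : 0 < d + h) :
    StrictAnti (fun μ : ℝ => (1/2) * ((1 - 2*(μ - c₀)/σ^2) +
      Real.sqrt ((1 - 2*(μ - c₀)/σ^2)^2 + 8*(d+h)/σ^2))) := by
  have hσ2 : 0 < σ ^ 2 := by positivity
  have hdrift : StrictAnti fun μ : ℝ => 1 - 2 * (μ - c₀) / σ ^ 2 := by
    intro μ₁ μ₂ hμ
    have : 2 * (μ₁ - c₀) / σ ^ 2 < 2 * (μ₂ - c₀) / σ ^ 2 := by gcongr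
    linarith
  have hK : 0 < 8 * (d + h) / σ ^ 2 := by positivity
  exact ((strictMono_add_sqrt_sq_add hK).comp_strictAnti hdrift).const_mul one_half_pos
end

section
/- Let α, η ∈ ℝ with α² + 4η > 0, and set γ := √(α² + 4η). Then for every w ∈ ℝ with w ≠ 0, the integral ∫₀^∞ exp(−ητ)·(4πτ)^(−1/2)·exp(−(w − ατ)²/(4τ)) dτ converges and equals (1/γ)·exp((αw − γ|w|)/2). -/
/-!
Completing the square in the exponent, with `a = |w| / 2` and `b = γ / 2` the integrand is
`(4π)^(-1/2) e^((αw - γ|w|)/2) τ^(-1/2) exp (-(b √τ - a / √τ)²)`. After `τ = u²` this is a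
Cauchy–Schlömilch integral `∫₀^∞ f (b u - a / u) du` with `f` the Gaussian. The substitution
`v = b u - a / u` maps `(0, ∞)` onto `ℝ` with Jacobian `b + a / u²`, and the involution
`u ↦ a / (b u)` shows that the `a / u²` part contributes as much as the `b` part, so the
integral is `(2b)⁻¹ ∫ f = √π / (2b)`.
-/

open Real MeasureTheory Set

section CauchySchlomilch

variable {E : Type*} [NormedAddCommGroup E] [NormedSpace ℝ E] {a b : ℝ}

lemma hasDerivAt_mul_sub_div {x : ℝ} (hx : x ≠ 0) :
    HasDerivAt (fun u : ℝ => b * u - a / u) (b + a / x ^ 2) x := by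
  simpa [div_eq_mul_inv] using
    ((hasDerivAt_id' x).const_mul b).fun_sub ((hasDerivAt_inv hx).const_mul a)

lemma strictMonoOn_mul_sub_div (ha : 0 < a) (hb : 0 < b) :
    StrictMonoOn (fun u : ℝ => b * u - a / u) (Ioi 0) := by
  intro u hu v _ huv
  have := div_lt_div_of_pos_left ha hu huv
  have := mul_lt_mul_of_pos_left huv hb
  dsimp only
  linarith

lemma image_mul_sub_div_Ioi (ha : 0 < a) (hb : 0 < b) :
    (fun u : ℝ => b * u - a / u) '' Ioi 0 = univ := by
  refine eq_univ_of_forall fun y => ?_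
  set s := √(y ^ 2 + 4 * a * b)
  have hs : s ^ 2 = y ^ 2 + 4 * a * b := sq_sqrt (by positivity)
  have hys : 0 < y + s := by
    have : |y| < s := by
      rw [← sqrt_sq_eq_abs]
      exact sqrt_lt_sqrt (sq_nonneg y) (by linarith [mul_pos ha hb])
    linarith [neg_abs_le y]
  refine ⟨(y + s) / (2 * b), div_pos hys (by positivity), ?_⟩
  field_simp
  linear_combination hs

lemma integrableOn_Ioi_abs_smul_comp_mul_sub_div_iff (ha : 0 < a) (hb : 0 < b) (f : ℝ → E) :
    IntegrableOn (fun u => |b + a / u ^ 2| • f (b * u - a / u)) (Ioi 0) ↔ Integrable f := by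
  have := integrableOn_image_iff_integrableOn_abs_deriv_smul measurableSet_Ioi
    (fun x hx => (hasDerivAt_mul_sub_div (ne_of_gt hx)).hasDerivWithinAt)
    (strictMonoOn_mul_sub_div ha hb).injOn f
  rwa [image_mul_sub_div_Ioi ha hb, integrableOn_univ, Iff.comm] at this

lemma integral_Ioi_abs_smul_comp_mul_sub_div (ha : 0 < a) (hb : 0 < b) (f : ℝ → E) :
    ∫ u in Ioi 0, |b + a / u ^ 2| • f (b * u - a / u) = ∫ v, f v := by
  have := integral_image_eq_integral_abs_deriv_smul measurableSet_Ioi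
    (fun x hx => (hasDerivAt_mul_sub_div (ne_of_gt hx)).hasDerivWithinAt)
    (strictMonoOn_mul_sub_div ha hb).injOn f
  rwa [image_mul_sub_div_Ioi ha hb, Measure.restrict_univ, eq_comm] at this

lemma integrableOn_Ioi_comp_mul_sub_div {f : ℝ → E} (hf : Integrable f) (ha : 0 < a)
    (hb : 0 < b) : IntegrableOn (fun u => f (b * u - a / u)) (Ioi 0) := by
  have hW := (integrableOn_Ioi_abs_smul_comp_mul_sub_div_iff ha hb f).mpr hf
  refine IntegrableOn.congr_fun (hW.bdd_smul b⁻¹ (φ := fun u => |b + a / u ^ 2|⁻¹)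
    (by fun_prop : Measurable _).aestronglyMeasurable ?_) (fun u (hu : 0 < u) => ?_)
    measurableSet_Ioi
  · filter_upwards [ae_restrict_mem measurableSet_Ioi] with u (hu : 0 < u)
    rw [norm_inv, Real.norm_eq_abs, abs_abs, inv_le_inv₀ (by positivity) hb,
      abs_of_pos (by positivity)]
    linarith [div_pos ha (pow_pos hu 2)]
  · simp [smul_smul, inv_mul_cancel₀ (by positivity : |b + a / u ^ 2| ≠ 0)]

lemma integral_Ioi_div_sq_smul_comp_div (g : ℝ → E) {c : ℝ} (hc : 0 < c) :
    ∫ u in Ioi 0, (c / u ^ 2) • g (c / u) = ∫ u in Ioi 0, g u := by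
  have hderiv : ∀ x ∈ Ioi (0 : ℝ), HasDerivWithinAt (fun u => c / u) (-(c / x ^ 2)) (Ioi 0) x :=
    fun x hx => by
      simpa [div_eq_mul_inv] using ((hasDerivAt_inv (ne_of_gt hx)).const_mul c).hasDerivWithinAt
  have himage : (fun u => c / u) '' Ioi 0 = Ioi 0 := by
    ext x
    refine ⟨fun ⟨u, (hu : 0 < u), hx⟩ => hx ▸ div_pos hc hu, fun (hx : 0 < x) => ?_⟩
    exact ⟨c / x, div_pos hc hx, by field_simp⟩
  have := integral_image_eq_integral_abs_deriv_smul measurableSet_Ioi hderiv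
    (fun u (hu : 0 < u) v (hv : 0 < v) h => by field_simp at h; linarith) g
  rw [himage] at this
  rw [this]
  refine setIntegral_congr_fun measurableSet_Ioi fun u (hu : 0 < u) => ?_
  rw [abs_neg, abs_of_pos (by positivity)]

theorem integral_Ioi_comp_mul_sub_div {f : ℝ → E} (hf : Integrable f) (heven : Function.Even f)
    (ha : 0 < a) (hb : 0 < b) :
    ∫ u in Ioi 0, f (b * u - a / u) = (2 * b)⁻¹ • ∫ v, f v := by
  set I := ∫ u in Ioi 0, f (b * u - a / u)
  have hI := integrableOn_Ioi_comp_mul_sub_div hf ha hb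
  have hW := (integrableOn_Ioi_abs_smul_comp_mul_sub_div_iff ha hb f).mpr hf
  have hsplit : ∀ u ∈ Ioi (0 : ℝ), |b + a / u ^ 2| • f (b * u - a / u) =
      b • f (b * u - a / u) + (a / u ^ 2) • f (b * u - a / u) := fun u (hu : 0 < u) => by
    rw [abs_of_pos (by positivity), add_smul]
  -- the involution `u ↦ (a / b) / u` of `(0, ∞)` reverses the sign of `b u - a / u`
  have hrecip : ∫ u in Ioi 0, (a / u ^ 2) • f (b * u - a / u) = b • I := by
    rw [← integral_Ioi_div_sq_smul_comp_div _ (div_pos ha hb), ← integral_smul]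
    refine setIntegral_congr_fun measurableSet_Ioi fun u (hu : 0 < u) => ?_
    have hneg : b * (a / b / u) - a / (a / b / u) = -(b * u - a / u) := by field_simp; ring
    rw [hneg, heven, smul_smul]
    congr 1
    field_simp
  have hA : IntegrableOn (fun u => (a / u ^ 2) • f (b * u - a / u)) (Ioi 0) :=
    (hW.sub (hI.smul b)).congr_fun (fun u hu => by simp [hsplit u hu]) measurableSet_Ioi
  rw [← integral_Ioi_abs_smul_comp_mul_sub_div ha hb,
    setIntegral_congr_fun measurableSet_Ioi hsplit, integral_add (by exact hI.smul b) hA, integral_smul, hrecip, ← two_smul ℝ, smul_smul,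
    smul_smul, show (2 * b)⁻¹ * 2 * b = 1 by field_simp, one_smul]

lemma integrableOn_Ioi_rpow_neg_half_smul_comp_mul_sqrt_sub_div_sqrt {f : ℝ → E}
    (hf : Integrable f) (ha : 0 < a) (hb : 0 < b) :
    IntegrableOn (fun τ => τ ^ (-(1 : ℝ) / 2) • f (b * √τ - a / √τ)) (Ioi 0) := by
  have := (integrableOn_Ioi_comp_rpow_iff' (fun u => f (b * u - a / u)) one_half_pos.ne').mpr
    (integrableOn_Ioi_comp_mul_sub_div hf ha hb)
  simpa only [← sqrt_eq_rpow, show (1 / 2 : ℝ) - 1 = -1 / 2 by norm_num] using this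

theorem integral_Ioi_rpow_neg_half_smul_comp_mul_sqrt_sub_div_sqrt {f : ℝ → E}
    (hf : Integrable f) (heven : Function.Even f) (ha : 0 < a) (hb : 0 < b) :
    ∫ τ in Ioi 0, τ ^ (-(1 : ℝ) / 2) • f (b * √τ - a / √τ) = b⁻¹ • ∫ v, f v := by
  have := integral_comp_rpow_Ioi_of_pos (g := fun u => f (b * u - a / u)) one_half_pos
  simp only [← sqrt_eq_rpow, show (1 / 2 : ℝ) - 1 = -1 / 2 by norm_num, mul_smul, integral_smul,
    integral_Ioi_comp_mul_sub_div hf heven ha hb] at this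
  calc _ = (2 : ℝ) • (1 / 2 : ℝ) • ∫ τ in Ioi 0, τ ^ (-(1 : ℝ) / 2) • f (b * √τ - a / √τ) := by
        rw [smul_smul]; norm_num
    _ = b⁻¹ • ∫ v, f v := by
        rw [this, smul_smul]; congr 1; field_simp

end CauchySchlomilch

lemma discounted_heat_kernel_eq_completed_square {α η γ : ℝ} (hγ : γ ^ 2 = α ^ 2 + 4 * η)
    (w : ℝ) {τ : ℝ} (hτ : 0 < τ) :
    exp (-η * τ) * (4 * π * τ) ^ (-(1 : ℝ) / 2) * exp (-(w - α * τ) ^ 2 / (4 * τ)) =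
      (4 * π) ^ (-(1 : ℝ) / 2) * exp ((α * w - γ * |w|) / 2) *
        (τ ^ (-(1 : ℝ) / 2) * exp (-(γ / 2 * √τ - |w| / 2 / √τ) ^ 2)) := by
  have hexp : -η * τ + -(w - α * τ) ^ 2 / (4 * τ) =
      (α * w - γ * |w|) / 2 + -(γ / 2 * √τ - |w| / 2 / √τ) ^ 2 := by
    have hs : 0 < √τ := sqrt_pos.mpr hτ
    have hτs : τ = √τ ^ 2 := (sq_sqrt hτ.le).symm
    generalize √τ = s at hs hτs
    subst hτs
    field_simp
    linear_combination 4 * s ^ 4 * hγ + 4 * sq_abs w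
  rw [mul_rpow (by positivity) hτ.le]
  calc _ = (4 * π) ^ (-(1 : ℝ) / 2) * τ ^ (-(1 : ℝ) / 2) *
        exp (-η * τ + -(w - α * τ) ^ 2 / (4 * τ)) := by rw [exp_add]; ring
    _ = _ := by rw [hexp, exp_add]; ring

theorem discounted_heat_kernel_laplace (α η : ℝ) (hαη : 0 < α^2 + 4*η)
    (γ : ℝ) (hγ : γ = Real.sqrt (α^2 + 4*η)) :
    ∀ w : ℝ, w ≠ 0 →
      MeasureTheory.IntegrableOn
        (fun τ : ℝ => Real.exp (-η*τ) * (4*Real.pi*τ)^(-(1:ℝ)/2) *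
          Real.exp (-(w - α*τ)^2/(4*τ))) (Set.Ioi 0) ∧
      ∫ τ in Set.Ioi (0:ℝ), Real.exp (-η*τ) * (4*Real.pi*τ)^(-(1:ℝ)/2) *
          Real.exp (-(w - α*τ)^2/(4*τ)) =
        (1/γ) * Real.exp ((α*w - γ*|w|)/2) := by
  intro w hw
  have hγ_pos : 0 < γ := hγ ▸ sqrt_pos.mpr hαη
  have hγ_sq : γ ^ 2 = α ^ 2 + 4 * η := hγ ▸ sq_sqrt hαη.le
  have ha : 0 < |w| / 2 := by positivity
  have hb : 0 < γ / 2 := by positivity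
  have hG : Integrable fun v : ℝ => exp (-v ^ 2) := by
    simpa using integrable_exp_neg_mul_sq one_pos
  have hG_even : Function.Even fun v : ℝ => exp (-v ^ 2) := fun v => by simp only [neg_sq]
  have hkernel := fun τ (hτ : τ ∈ Ioi (0 : ℝ)) =>
    discounted_heat_kernel_eq_completed_square hγ_sq w hτ
  have hI : ∫ τ in Ioi 0, τ ^ (-(1 : ℝ) / 2) * exp (-(γ / 2 * √τ - |w| / 2 / √τ) ^ 2) =
      (γ / 2)⁻¹ * √π :=
    (integral_Ioi_rpow_neg_half_smul_comp_mul_sqrt_sub_div_sqrt hG hG_even ha hb).trans (by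
      rw [smul_eq_mul, show ∫ v, exp (-v ^ 2) = √π by simpa using integral_gaussian 1])
  have h4π : (4 * π) ^ (-(1 : ℝ) / 2) = (2 * √π)⁻¹ := by
    rw [neg_div, rpow_neg (by positivity), ← sqrt_eq_rpow, sqrt_mul (by norm_num),
      show (4 : ℝ) = 2 ^ 2 by norm_num, sqrt_sq zero_le_two]
  refine ⟨IntegrableOn.congr_fun
    ((integrableOn_Ioi_rpow_neg_half_smul_comp_mul_sqrt_sub_div_sqrt hG ha hb).const_mul _)
    (fun τ hτ => (hkernel τ hτ).symm) measurableSet_Ioi, ?_⟩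
  rw [setIntegral_congr_fun measurableSet_Ioi hkernel, integral_const_mul, hI, h4π]
  field_simp
end

section
/- Let α ∈ ℝ, z₀ > 0, and η ∈ ℝ with α² + 4η > 0, and set γ := √(α² + 4η). Define the killed density φ(z, τ) := (4πτ)^(−1/2)·[exp(−(z − z₀ − ατ)²/(4τ)) − exp(−α·z₀)·exp(−(z + z₀ − ατ)²/(4τ))]. Then for every z > 0, ∫₀^∞ exp(−ητ)·φ(z, τ) dτ = (1/γ)·[exp((α(z − z₀) − γ|z − z₀|)/2) − exp(−α·z₀)·exp((α(z + z₀) − γ(z + z₀))/2)]. In particular, for z > z₀ this expression equals (1/γ)·(1 − exp(−γ·z₀))·exp(−(γ − α)(z − z₀)/2), so the exponentially discounted age-integrated density decays in z as exp(−(γ − α)z/2), i.e. as a power law of exponent m = (γ − α)/2 in the original size variable s = e^z. -/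
/-!
Each image term of `φ` is a drifted heat kernel. After the substitution `τ = s ^ 2`, completing
the square turns `exp (-η τ)` times the kernel at displacement `y` into
`exp ((α y - γ |y|) / 2) / √π · exp (-(γ s / 2 - |y| / (2 s)) ^ 2)`,
and the remaining integral is a half Gaussian integral by Glasser's master theorem:
`u = x - c / x` maps `(0, ∞)` onto `ℝ` with Jacobian `1 + c / x ^ 2`, and the involution
`x ↦ c / x` shows that the two halves of this Jacobian contribute equally.
-/

open Real MeasureTheory Set

section ChangeOfVariables

variable {E : Type*} [NormedAddCommGroup E] [NormedSpace ℝ E] {c : ℝ}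

lemma hasDerivAt_sub_const_div {x : ℝ} (hx : x ≠ 0) :
    HasDerivAt (fun x => x - c / x) (1 + c / x ^ 2) x :=
  ((hasDerivAt_id' x).fun_sub ((hasDerivAt_const x c).fun_div (hasDerivAt_id' x) hx)).congr_deriv
    (by ring)

lemma strictMonoOn_sub_const_div (hc : 0 ≤ c) : StrictMonoOn (fun x => x - c / x) (Ioi 0) :=
  fun x hx _ _ hxy => by
    have := div_le_div_of_nonneg_left hc hx hxy.le
    dsimp only
    linarith

lemma image_sub_const_div_Ioi (hc : 0 < c) : (fun x => x - c / x) '' Ioi 0 = univ := by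
  refine eq_univ_of_forall fun y => ?_
  have hroot : 0 < y + √(y ^ 2 + 4 * c) := by
    have : |y| < √(y ^ 2 + 4 * c) := by
      rw [← sqrt_sq_eq_abs]; exact sqrt_lt_sqrt (sq_nonneg y) (by linarith)
    linarith [neg_abs_le y]
  refine ⟨(y + √(y ^ 2 + 4 * c)) / 2, half_pos hroot, ?_⟩
  have hsq : √(y ^ 2 + 4 * c) ^ 2 = y ^ 2 + 4 * c := sq_sqrt (by positivity)
  field_simp
  linear_combination hsq

lemma bijOn_const_div_Ioi (hc : 0 < c) : BijOn (fun x => c / x) (Ioi 0) (Ioi 0) :=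
  InvOn.bijOn ⟨fun _ _ => div_div_cancel₀ hc.ne', fun _ _ => div_div_cancel₀ hc.ne'⟩
    (fun _ hx => div_pos hc hx) (fun _ hx => div_pos hc hx)

lemma integral_comp_const_div_Ioi (hc : 0 < c) (F : ℝ → E) :
    ∫ x in Ioi 0, (c / x ^ 2) • F (c / x) = ∫ x in Ioi 0, F x := by
  have hderiv :
      ∀ x ∈ Ioi (0 : ℝ), HasDerivWithinAt (fun x => c / x) (-(c / x ^ 2)) (Ioi 0) x :=
    fun x hx => (((hasDerivAt_const x c).fun_div (hasDerivAt_id' x) (ne_of_gt hx)).congr_deriv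
      (by ring)).hasDerivWithinAt
  have := integral_image_eq_integral_abs_deriv_smul measurableSet_Ioi hderiv
    (bijOn_const_div_Ioi hc).injOn F
  rw [(bijOn_const_div_Ioi hc).image_eq] at this
  rw [this]
  refine setIntegral_congr_fun measurableSet_Ioi fun x hx => ?_
  rw [abs_neg, abs_of_pos (div_pos hc (pow_pos (mem_Ioi.1 hx) 2))]

lemma hasDerivWithinAt_sub_const_div_Ioi :
    ∀ x ∈ Ioi (0 : ℝ), HasDerivWithinAt (fun x => x - c / x) (1 + c / x ^ 2) (Ioi 0) x :=
  fun _ hx => (hasDerivAt_sub_const_div (ne_of_gt hx)).hasDerivWithinAt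

lemma abs_one_add_div_sq {x : ℝ} (hc : 0 ≤ c) : |1 + c / x ^ 2| = 1 + c / x ^ 2 :=
  abs_of_nonneg (by positivity)

lemma integrableOn_deriv_smul_comp_sub_const_div_Ioi_iff (hc : 0 < c) (g : ℝ → E) :
    IntegrableOn (fun x => (1 + c / x ^ 2) • g (x - c / x)) (Ioi 0) ↔ Integrable g := by
  rw [← integrableOn_univ, ← image_sub_const_div_Ioi hc,
    integrableOn_image_iff_integrableOn_abs_deriv_smul measurableSet_Ioi
      hasDerivWithinAt_sub_const_div_Ioi (strictMonoOn_sub_const_div hc.le).injOn]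
  simp only [abs_one_add_div_sq hc.le]

lemma integral_deriv_smul_comp_sub_const_div_Ioi (hc : 0 < c) (g : ℝ → E) :
    ∫ x in Ioi 0, (1 + c / x ^ 2) • g (x - c / x) = ∫ y, g y := by
  have := integral_image_eq_integral_abs_deriv_smul measurableSet_Ioi
    hasDerivWithinAt_sub_const_div_Ioi (strictMonoOn_sub_const_div hc.le).injOn g
  rw [image_sub_const_div_Ioi hc, setIntegral_univ] at this
  simpa only [abs_one_add_div_sq hc.le] using this.symm

lemma integrableOn_comp_sub_const_div_Ioi (hc : 0 < c) {g : ℝ → E} (hg : Integrable g) :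
    IntegrableOn (fun x => g (x - c / x)) (Ioi 0) := by
  have hweighted := (integrableOn_deriv_smul_comp_sub_const_div_Ioi_iff hc g).2 hg
  have hbdd : ∀ x ∈ Ioi (0 : ℝ), ‖(1 + c / x ^ 2)⁻¹‖ ≤ 1 := fun x _ => by
    rw [norm_inv, Real.norm_eq_abs, abs_one_add_div_sq hc.le]
    exact inv_le_one_of_one_le₀ (le_add_of_nonneg_right (by positivity))
  refine IntegrableOn.congr_fun (hweighted.bdd_smul 1
    (by fun_prop : Measurable fun x : ℝ => (1 + c / x ^ 2)⁻¹).aestronglyMeasurable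
    (ae_restrict_of_forall_mem measurableSet_Ioi hbdd)) (fun x (hx : 0 < x) => ?_)
    measurableSet_Ioi
  have : 1 + c / x ^ 2 ≠ 0 := by positivity
  simp only [Pi.smul_apply', smul_smul, inv_mul_cancel₀ this, one_smul]

/-- Glasser's master theorem for `x ↦ x - c / x` on the half-line. -/
theorem integral_comp_sub_const_div_Ioi (hc : 0 < c) {g : ℝ → E} (hg : Integrable g)
    (heven : ∀ y, g (-y) = g y) :
    ∫ x in Ioi 0, g (x - c / x) = (2 : ℝ)⁻¹ • ∫ y, g y := by
  have hint := integrableOn_comp_sub_const_div_Ioi hc hg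
  have hweighted := (integrableOn_deriv_smul_comp_sub_const_div_Ioi_iff hc g).2 hg
  have hrest : IntegrableOn (fun x => (c / x ^ 2) • g (x - c / x)) (Ioi 0) :=
    (hweighted.sub hint).congr_fun
      (fun x _ => by simp only [Pi.sub_apply, add_smul, one_smul, add_sub_cancel_left])
      measurableSet_Ioi
  have hreflect :
      ∫ x in Ioi 0, (c / x ^ 2) • g (x - c / x) = ∫ x in Ioi 0, g (x - c / x) := by
    conv_rhs => rw [← integral_comp_const_div_Ioi hc]
    refine setIntegral_congr_fun measurableSet_Ioi fun x _ => ?_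
    rw [div_div_cancel₀ hc.ne', ← heven, neg_sub]
  have hsplit : ∫ y, g y =
      (∫ x in Ioi 0, g (x - c / x)) + ∫ x in Ioi 0, (c / x ^ 2) • g (x - c / x) := by
    rw [← integral_deriv_smul_comp_sub_const_div_Ioi hc, ← integral_add hint hrest]
    simp only [add_smul, one_smul]
  rw [hsplit, hreflect]
  module

lemma integral_comp_sq_Ioi (g : ℝ → E) :
    ∫ x in Ioi 0, (2 * x) • g (x ^ 2) = ∫ y in Ioi 0, g y := by
  rw [← integral_comp_rpow_Ioi_of_pos (g := g) two_pos]
  refine setIntegral_congr_fun measurableSet_Ioi fun x _ => ?_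
  norm_num [rpow_two]

lemma integrableOn_comp_sq_Ioi_iff (g : ℝ → E) :
    IntegrableOn (fun x => (2 * x) • g (x ^ 2)) (Ioi 0) ↔ IntegrableOn g (Ioi 0) := by
  rw [← integrableOn_Ioi_comp_rpow_iff g two_ne_zero]
  refine integrableOn_congr_fun (fun x _ => ?_) measurableSet_Ioi
  norm_num [rpow_two]

end ChangeOfVariables

lemma integrable_exp_neg_sq : Integrable fun y : ℝ => exp (-y ^ 2) := by
  simpa using integrable_exp_neg_mul_sq one_pos

section GaussianSubDiv

variable {b c : ℝ}

lemma integrableOn_exp_neg_sq_sub_const_div_Ioi (hc : 0 ≤ c) :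
    IntegrableOn (fun x => exp (-(x - c / x) ^ 2)) (Ioi 0) := by
  rcases hc.eq_or_lt with rfl | hc
  · simpa using integrable_exp_neg_sq.integrableOn
  · exact integrableOn_comp_sub_const_div_Ioi hc integrable_exp_neg_sq

lemma integral_exp_neg_sq_sub_const_div_Ioi (hc : 0 ≤ c) :
    ∫ x in Ioi 0, exp (-(x - c / x) ^ 2) = √π / 2 := by
  rcases hc.eq_or_lt with rfl | hc
  · simpa using integral_gaussian_Ioi 1
  · rw [integral_comp_sub_const_div_Ioi hc integrable_exp_neg_sq (fun y => by rw [neg_sq])]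
    simpa [div_eq_inv_mul] using integral_gaussian 1

lemma integrableOn_exp_neg_sq_mul_sub_div_Ioi (hb : 0 < b) (hc : 0 ≤ c) :
    IntegrableOn (fun x => exp (-(b * x - c / x) ^ 2)) (Ioi 0) := by
  have := (integrableOn_Ioi_comp_mul_left_iff (fun y => exp (-(y - b * c / y) ^ 2)) 0 hb).2
    (by simpa using integrableOn_exp_neg_sq_sub_const_div_Ioi (mul_nonneg hb.le hc))
  simpa only [mul_div_mul_left c _ hb.ne'] using this

lemma integral_exp_neg_sq_mul_sub_div_Ioi (hb : 0 < b) (hc : 0 ≤ c) :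
    ∫ x in Ioi 0, exp (-(b * x - c / x) ^ 2) = √π / (2 * b) := by
  have := integral_comp_mul_left_Ioi (fun y => exp (-(y - b * c / y) ^ 2)) 0 hb
  simp only [mul_div_mul_left c _ hb.ne', mul_zero, smul_eq_mul] at this
  rw [this, integral_exp_neg_sq_sub_const_div_Ioi (mul_nonneg hb.le hc)]
  field_simp

end GaussianSubDiv

/-- Transition density from `0` to `y` of `dX = α dτ + √2 dW`, without absorption. -/
noncomputable def driftedHeatKernel (α y τ : ℝ) : ℝ :=
  (4 * π * τ) ^ (-(1 : ℝ) / 2) * exp (-(y - α * τ) ^ 2 / (4 * τ))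

section DriftedHeatKernel

variable {α η y γ : ℝ}

lemma rpow_neg_half_four_pi_mul_sq {s : ℝ} (hs : 0 < s) :
    (4 * π * s ^ 2) ^ (-(1 : ℝ) / 2) = (2 * √π * s)⁻¹ := by
  rw [show 4 * π * s ^ 2 = (2 * √π * s) ^ 2 by rw [mul_pow, mul_pow, sq_sqrt pi_pos.le]; ring,
    ← rpow_natCast, ← rpow_mul (by positivity)]
  norm_num [rpow_neg_one]

lemma two_mul_exp_mul_driftedHeatKernel_sq (hγ : γ ^ 2 = α ^ 2 + 4 * η) {s : ℝ} (hs : 0 < s) :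
    2 * s * (exp (-η * s ^ 2) * driftedHeatKernel α y (s ^ 2)) =
      exp ((α * y - γ * |y|) / 2) / √π * exp (-(γ / 2 * s - |y| / 2 / s) ^ 2) := by
  have hexponent : -η * s ^ 2 + -(y - α * s ^ 2) ^ 2 / (4 * s ^ 2) =
      (α * y - γ * |y|) / 2 + -(γ / 2 * s - |y| / 2 / s) ^ 2 := by
    field_simp
    linear_combination 4 * s ^ 4 * hγ + 4 * sq_abs y
  rw [driftedHeatKernel, rpow_neg_half_four_pi_mul_sq hs, div_mul_eq_mul_div,
    ← exp_add, ← hexponent, exp_add]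
  field_simp

lemma integrableOn_exp_mul_driftedHeatKernel (h : 0 < α ^ 2 + 4 * η) :
    IntegrableOn (fun τ => exp (-η * τ) * driftedHeatKernel α y τ) (Ioi 0) := by
  set γ := √(α ^ 2 + 4 * η)
  have hγ : γ ^ 2 = α ^ 2 + 4 * η := sq_sqrt h.le
  rw [← integrableOn_comp_sq_Ioi_iff]
  exact IntegrableOn.congr_fun
    ((integrableOn_exp_neg_sq_mul_sub_div_Ioi (half_pos (sqrt_pos.2 h))
      (div_nonneg (abs_nonneg y) zero_le_two)).const_mul _)
    (fun s hs => (two_mul_exp_mul_driftedHeatKernel_sq hγ hs).symm) measurableSet_Ioi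

lemma integral_exp_mul_driftedHeatKernel (h : 0 < α ^ 2 + 4 * η) :
    ∫ τ in Ioi 0, exp (-η * τ) * driftedHeatKernel α y τ =
      exp ((α * y - √(α ^ 2 + 4 * η) * |y|) / 2) / √(α ^ 2 + 4 * η) := by
  set γ := √(α ^ 2 + 4 * η)
  have hγ : γ ^ 2 = α ^ 2 + 4 * η := sq_sqrt h.le
  have hγpos : 0 < γ := sqrt_pos.2 h
  rw [← integral_comp_sq_Ioi]
  simp only [smul_eq_mul]
  rw [setIntegral_congr_fun measurableSet_Ioi
      (fun s hs => two_mul_exp_mul_driftedHeatKernel_sq hγ hs), integral_const_mul,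
    integral_exp_neg_sq_mul_sub_div_Ioi (half_pos hγpos) (div_nonneg (abs_nonneg y) zero_le_two)]
  field_simp

end DriftedHeatKernel

theorem discounted_killed_density_power_law (α z₀ η : ℝ) (hz₀ : 0 < z₀)
    (hαη : 0 < α^2 + 4*η) (γ : ℝ) (hγ : γ = Real.sqrt (α^2 + 4*η))
    (φ : ℝ → ℝ → ℝ)
    (hφ : ∀ z τ, φ z τ = (4*Real.pi*τ)^(-(1:ℝ)/2) *
      (Real.exp (-(z - z₀ - α*τ)^2/(4*τ)) -
        Real.exp (-α*z₀) * Real.exp (-(z + z₀ - α*τ)^2/(4*τ)))) :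
    ∀ z : ℝ, 0 < z →
      (∫ τ in Set.Ioi (0:ℝ), Real.exp (-η*τ) * φ z τ =
        (1/γ) * (Real.exp ((α*(z - z₀) - γ*|z - z₀|)/2) -
          Real.exp (-α*z₀) * Real.exp ((α*(z + z₀) - γ*(z + z₀))/2))) ∧
      (z₀ < z →
        (1/γ) * (Real.exp ((α*(z - z₀) - γ*|z - z₀|)/2) -
            Real.exp (-α*z₀) * Real.exp ((α*(z + z₀) - γ*(z + z₀))/2)) =
          (1/γ) * (1 - Real.exp (-γ*z₀)) *
            Real.exp (-(γ - α)*(z - z₀)/2)) := by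
  intro z hz
  have himage : ∀ τ, exp (-η * τ) * φ z τ =
      exp (-η * τ) * driftedHeatKernel α (z - z₀) τ -
        exp (-α * z₀) * (exp (-η * τ) * driftedHeatKernel α (z + z₀) τ) := fun τ => by
    rw [hφ, driftedHeatKernel, driftedHeatKernel]
    ring
  refine ⟨?_, fun hz₀z => ?_⟩
  · simp_rw [himage]
    rw [integral_sub (integrableOn_exp_mul_driftedHeatKernel hαη)
        ((integrableOn_exp_mul_driftedHeatKernel hαη).const_mul _), integral_const_mul,
      integral_exp_mul_driftedHeatKernel hαη, integral_exp_mul_driftedHeatKernel hαη, ← hγ,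
      abs_of_pos (add_pos hz hz₀)]
    ring
  · have hnear : (α * (z - z₀) - γ * (z - z₀)) / 2 = -(γ - α) * (z - z₀) / 2 := by ring
    have hfar : -α * z₀ + (α * (z + z₀) - γ * (z + z₀)) / 2 =
        -γ * z₀ + -(γ - α) * (z - z₀) / 2 := by ring
    rw [abs_of_pos (sub_pos.2 hz₀z), hnear, ← exp_add, hfar, exp_add]
    ring
end

section
/- Let μ, h, d, c₀ ∈ ℝ and ν₀ > 0, s₀ > 0, and define the mean total size of the economy Ω(t) := ∫₀ᵗ ν₀·s₀·exp((μ − h)(t − u))·exp((d + c₀)u) du for t > 0. Then (log Ω(t))/t tends to max{μ − h, d + c₀} as t → +∞; that is, the long-term average growth rate of the overall economy equals the maximum of the average growth rate μ − h of incumbent firms and the growth rate d + c₀ of investments in new entrant firms. -/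
/-!
Writing `a = μ - h`, `b = d + c₀` and `M = max a b`, the integrand is `ν₀ s₀ exp (a (t - u) + b u)`,
and the exponent is affine in `u` with extreme values `a t` and `b t` at the two endpoints. Hence
`Ω t ≤ ν₀ s₀ t exp (M t)`, while integrating over the unit interval at the endpoint where `M t` is
attained gives `Ω t ≥ ν₀ s₀ exp (M t - |a - b|)`. Both bounds have logarithm `M t + O (log t)`.
-/

open Real Filter Topology

noncomputable def expConv (a b t : ℝ) : ℝ :=
  ∫ u in (0 : ℝ)..t, exp (a * (t - u)) * exp (b * u)

namespace expConv

variable (a b : ℝ) {t : ℝ}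

lemma intervalIntegrable (t x y : ℝ) :
    IntervalIntegrable (fun u => exp (a * (t - u)) * exp (b * u)) MeasureTheory.volume x y :=
  (by fun_prop : Continuous fun u => exp (a * (t - u)) * exp (b * u)).intervalIntegrable x y

lemma comm (t : ℝ) : expConv a b t = expConv b a t := by
  calc expConv a b t = ∫ u in (0 : ℝ)..t, (fun v => exp (b * (t - v)) * exp (a * v)) (t - u) := by
        simp only [expConv, sub_sub_cancel, mul_comm]
    _ = expConv b a t := by
        rw [intervalIntegral.integral_comp_sub_left (fun v => exp (b * (t - v)) * exp (a * v)),
          sub_self, sub_zero, expConv]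

lemma le_mul_exp_max (ht : 0 ≤ t) : expConv a b t ≤ t * exp (max a b * t) := by
  calc expConv a b t ≤ ∫ _ in (0 : ℝ)..t, exp (max a b * t) := by
        refine intervalIntegral.integral_mono_on ht (intervalIntegrable a b t 0 t)
          intervalIntegrable_const fun u ⟨hu₀, hut⟩ => ?_
        rw [← exp_add, exp_le_exp]
        nlinarith [le_max_left a b, le_max_right a b]
    _ = t * exp (max a b * t) := by simp

lemma exp_sub_le_of_le (hab : a ≤ b) (ht : 1 ≤ t) : exp (b * t - (b - a)) ≤ expConv a b t := by
  have hpos : ∀ u, 0 ≤ exp (a * (t - u)) * exp (b * u) := fun u => by positivity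
  calc exp (b * t - (b - a)) = ∫ _ in (t - 1)..t, exp (b * t - (b - a)) := by simp
    _ ≤ ∫ u in (t - 1)..t, exp (a * (t - u)) * exp (b * u) := by
        refine intervalIntegral.integral_mono_on (by linarith) intervalIntegrable_const
          (intervalIntegrable a b t _ _) fun u ⟨htu, hut⟩ => ?_
        rw [← exp_add, exp_le_exp]
        nlinarith
    _ ≤ expConv a b t :=
        intervalIntegral.integral_mono_interval (by linarith) (by linarith) le_rfl
          (Eventually.of_forall hpos) (intervalIntegrable a b t 0 t)

lemma exp_max_sub_abs_le (ht : 1 ≤ t) : exp (max a b * t - |a - b|) ≤ expConv a b t := by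
  rcases le_total a b with hab | hba
  · rw [max_eq_right hab, abs_sub_comm, abs_of_nonneg (sub_nonneg.2 hab)]
    exact exp_sub_le_of_le a b hab ht
  · rw [max_eq_left hba, abs_of_nonneg (sub_nonneg.2 hba), comm]
    exact exp_sub_le_of_le b a hba ht

end expConv

theorem tendsto_log_div_of_exp_le_of_le_mul_exp {f : ℝ → ℝ} {c C M : ℝ} (hc : 0 < c) (hC : 0 < C)
    (hlow : ∀ᶠ t in atTop, c * exp (M * t) ≤ f t)
    (hup : ∀ᶠ t in atTop, f t ≤ C * t * exp (M * t)) :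
    Tendsto (fun t => log (f t) / t) atTop (𝓝 M) := by
  have hlog_div : Tendsto (fun t => log t / t) atTop (𝓝 0) :=
    isLittleO_log_id_atTop.tendsto_div_nhds_zero
  have hconst_div : ∀ r : ℝ, Tendsto (fun t : ℝ => r / t) atTop (𝓝 0) := fun r =>
    tendsto_const_nhds.div_atTop tendsto_id
  refine tendsto_of_tendsto_of_tendsto_of_le_of_le'
    (g := fun t => log c / t + M) (h := fun t => log C / t + log t / t + M)
    (by simpa using (hconst_div (log c)).add_const M)
    (by simpa using ((hconst_div (log C)).add hlog_div).add_const M) ?_ ?_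
  · filter_upwards [hlow, eventually_gt_atTop 0] with t hlow ht
    have hlog : log c + M * t ≤ log (f t) := by
      simpa [log_mul hc.ne', log_exp] using log_le_log (by positivity) hlow
    calc log c / t + M = (log c + M * t) / t := by field_simp
      _ ≤ log (f t) / t := by gcongr
  · filter_upwards [hlow, hup, eventually_gt_atTop 0] with t hlow hup ht
    have hlog : log (f t) ≤ log C + log t + M * t := by
      simpa [log_mul, hC.ne', ht.ne', log_exp] using
        log_le_log ((by positivity : 0 < c * exp (M * t)).trans_le hlow) hup
    calc log (f t) / t ≤ (log C + log t + M * t) / t := by gcongr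
      _ = log C / t + log t / t + M := by field_simp

theorem economy_long_term_growth_rate (μ h d c₀ ν₀ s₀ : ℝ)
    (hν₀ : 0 < ν₀) (hs₀ : 0 < s₀)
    (Ω : ℝ → ℝ)
    (hΩ : ∀ t, Ω t = ∫ u in (0:ℝ)..t,
      ν₀ * s₀ * Real.exp ((μ - h)*(t - u)) * Real.exp ((d + c₀)*u)) :
    Filter.Tendsto (fun t => Real.log (Ω t) / t) Filter.atTop
      (nhds (max (μ - h) (d + c₀))) := by
  set a := μ - h
  set b := d + c₀
  have hK : 0 < ν₀ * s₀ := mul_pos hν₀ hs₀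
  have hΩ_eq : ∀ t, Ω t = ν₀ * s₀ * expConv a b t := fun t => by
    simp only [hΩ, expConv, mul_assoc, intervalIntegral.integral_const_mul]
  refine tendsto_log_div_of_exp_le_of_le_mul_exp (c := ν₀ * s₀ * exp (-|a - b|))
    (by positivity) hK ?_ ?_
  · filter_upwards [eventually_ge_atTop 1] with t ht
    calc ν₀ * s₀ * exp (-|a - b|) * exp (max a b * t)
        = ν₀ * s₀ * exp (max a b * t - |a - b|) := by rw [mul_assoc, ← exp_add, neg_add_eq_sub]
      _ ≤ Ω t := by rw [hΩ_eq]; gcongr; exact expConv.exp_max_sub_abs_le a b ht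
  · filter_upwards [eventually_ge_atTop 0] with t ht
    calc Ω t = ν₀ * s₀ * expConv a b t := hΩ_eq t
      _ ≤ ν₀ * s₀ * (t * exp (max a b * t)) := by gcongr; exact expConv.le_mul_exp_max a b ht
      _ = ν₀ * s₀ * t * exp (max a b * t) := by ring
end

section
/- Let μ, h, d, c₀ ∈ ℝ and ν₀, s₀ > 0 with d + h > 0 and μ − h > d + c₀. Define N(t) := (ν₀/(d+h))·(e^{dt} − e^{−ht}), Ω(t) := ∫₀ᵗ ν₀ s₀ e^{(μ−h)(t−u)} e^{(d+c₀)u} du, and the ratio of the average entrant size to the average incumbent size R(t) := s₀·e^{c₀t}·N(t)/Ω(t). Then e^{(μ−h−d−c₀)t}·R(t) tends to (μ − h − d − c₀)/(d + h) as t → +∞; that is, R(t) decays like ((μ−h−d−c₀)/(d+h))·e^{−(μ−h−d−c₀)t}. -/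
/-!
Both `N` and `Ω` are differences of two exponentials: `Ω` is the convolution of `e^{(μ-h)t}` with
`e^{(d+c₀)t}`, which integrates to `ν₀ s₀ (e^{(μ-h)t} - e^{(d+c₀)t}) / (μ-h-d-c₀)`. Dividing each
difference by its dominant exponential, `e^{dt}` resp. `e^{(μ-h)t}`, leaves a factor tending to `1`,
and these dominant exponentials cancel exactly against `e^{(μ-h-d-c₀)t} e^{c₀t}`.
-/

open Real Filter Topology intervalIntegral

theorem integral_exp_mul_sub_mul_exp {α β : ℝ} (hαβ : α ≠ β) (t : ℝ) :
    ∫ u in (0 : ℝ)..t, exp (α * (t - u)) * exp (β * u) =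
      (exp (α * t) - exp (β * t)) / (α - β) := by
  have hβα : β - α ≠ 0 := sub_ne_zero.2 hαβ.symm
  have hderiv : ∀ u : ℝ, HasDerivAt (fun v => exp (α * (t - v) + β * v) / (β - α))
      (exp (α * (t - u)) * exp (β * u)) u := by
    intro u
    have hlin : HasDerivAt (fun v => α * (t - v) + β * v) (β - α) u := by
      refine ((((hasDerivAt_id u).const_sub t).const_mul α).add
        ((hasDerivAt_id u).const_mul β)).congr_deriv ?_
      ring
    refine (hlin.exp.div_const (β - α)).congr_deriv ?_
    rw [exp_add]
    field_simp
  rw [integral_eq_sub_of_hasDerivAt (fun u _ => hderiv u)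
    (Continuous.intervalIntegrable (by fun_prop) _ _)]
  simp only [sub_self, mul_zero, zero_add, sub_zero, add_zero]
  have hαβ' : α - β ≠ 0 := sub_ne_zero.2 hαβ
  field_simp
  ring

theorem tendsto_exp_sub_exp_div_exp {p q : ℝ} (hqp : q < p) :
    Tendsto (fun t => (exp (p * t) - exp (q * t)) / exp (p * t)) atTop (𝓝 1) := by
  have hdecay : Tendsto (fun t => exp (-((p - q) * t))) atTop (𝓝 0) :=
    tendsto_exp_neg_atTop_nhds_zero.comp (tendsto_id.const_mul_atTop (sub_pos.2 hqp))
  convert (tendsto_const_nhds (x := (1 : ℝ))).sub hdecay using 1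
  · ext t
    rw [sub_div, div_self (exp_ne_zero _), ← exp_sub]
    ring_nf
  · simp

theorem entrant_to_incumbent_ratio_sustainable_regime (μ h d c₀ ν₀ s₀ : ℝ)
    (hν₀ : 0 < ν₀) (hs₀ : 0 < s₀) (hdh : 0 < d + h)
    (hreg : d + c₀ < μ - h)
    (N Ω R : ℝ → ℝ)
    (hN : ∀ t, N t = (ν₀/(d+h)) * (Real.exp (d*t) - Real.exp (-h*t)))
    (hΩ : ∀ t, Ω t = ∫ u in (0:ℝ)..t,
      ν₀ * s₀ * Real.exp ((μ - h)*(t - u)) * Real.exp ((d + c₀)*u))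
    (hR : ∀ t, R t = s₀ * Real.exp (c₀*t) * N t / Ω t) :
    Filter.Tendsto (fun t => Real.exp ((μ - h - d - c₀)*t) * R t)
      Filter.atTop (nhds ((μ - h - d - c₀)/(d + h))) := by
  have hΩ_closed : ∀ t, Ω t =
      ν₀ * s₀ * ((exp ((μ - h) * t) - exp ((d + c₀) * t)) / (μ - h - (d + c₀))) := by
    intro t
    rw [hΩ, ← integral_exp_mul_sub_mul_exp hreg.ne' t, ← integral_const_mul]
    simp only [mul_assoc]
  have hlim := ((tendsto_exp_sub_exp_div_exp (show -h < d by linarith)).div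
    (tendsto_exp_sub_exp_div_exp hreg) one_ne_zero).const_mul ((μ - h - d - c₀) / (d + h))
  rw [div_one, mul_one] at hlim
  refine hlim.congr fun t => ?_
  have hcancel : exp ((μ - h - d - c₀) * t) * exp (c₀ * t) * exp (d * t) = exp ((μ - h) * t) := by
    rw [← exp_add, ← exp_add]
    ring_nf
  rw [hR, hN, hΩ_closed, Pi.div_apply]
  field_simp
  -- both sides keep the denominator `e^{(μ-h)t} - e^{(d+c₀)t}`, so `t = 0` needs no special care
  congr 1
  linear_combination (-(μ - h - d - c₀) * (exp (d * t) - exp (-(h * t)))) * hcancel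
end

section
/- Let μ, h, d, c₀ ∈ ℝ and ν₀, s₀ > 0 with d + h > 0 and μ − h < d + c₀. Define N(t) := (ν₀/(d+h))·(e^{dt} − e^{−ht}), Ω(t) := ∫₀ᵗ ν₀ s₀ e^{(μ−h)(t−u)} e^{(d+c₀)u} du, and R(t) := s₀·e^{c₀t}·N(t)/Ω(t). Then R(t) tends to (d + c₀ + h − μ)/(d + h) as t → +∞; that is, the size of entrant firms relative to incumbent firms converges to a nonzero constant. -/
/-!
Integrating the convolution in closed form gives
`Ω(t) = ν₀ s₀ (e^{(d+c₀)t} - e^{(μ-h)t}) / (d + c₀ + h - μ)`, while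
`s₀ e^{c₀t} N(t) = s₀ ν₀ (e^{(d+c₀)t} - e^{(c₀-h)t}) / (d + h)`.
So `R(t)` is the constant `(d + c₀ + h - μ)/(d + h)` times a ratio of two differences of
exponentials sharing the dominant term `e^{(d+c₀)t}`; both subtracted exponentials grow
strictly slower (this is where `d + h > 0` and `μ - h < d + c₀` enter), so the ratio tends to `1`.
-/

open Real Filter Topology

lemma integral_exp_mul_sub_mul_exp_mul {b c : ℝ} (hbc : b ≠ c) (t : ℝ) :
    ∫ u in (0:ℝ)..t, exp (b * (t - u)) * exp (c * u) = (exp (c * t) - exp (b * t)) / (c - b) := by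
  have hcb : c - b ≠ 0 := sub_ne_zero.2 hbc.symm
  have hsplit : ∀ u, exp (b * (t - u)) * exp (c * u) = exp (b * t) * exp ((c - b) * u) := by
    intro u
    rw [← exp_add, ← exp_add]
    ring_nf
  simp_rw [hsplit]
  rw [intervalIntegral.integral_const_mul,
    intervalIntegral.integral_comp_mul_left (fun x => exp x) hcb, integral_exp, mul_zero, exp_zero,
    smul_eq_mul]
  have hexp : exp (c * t) = exp (b * t) * exp ((c - b) * t) := by rw [← exp_add]; ring_nf
  rw [hexp]
  field_simp

lemma tendsto_exp_sub_div_exp_sub {p q r : ℝ} (hq : q < p) (hr : r < p) :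
    Tendsto (fun t => (exp (p * t) - exp (q * t)) / (exp (p * t) - exp (r * t))) atTop (𝓝 1) := by
  have decay : ∀ s < p, Tendsto (fun t => exp ((s - p) * t)) atTop (𝓝 0) := fun s hs =>
    tendsto_exp_comp_nhds_zero.2 <|
      (tendsto_const_mul_atBot_of_neg (sub_neg.2 hs)).2 tendsto_id
  have hnorm : ∀ t, (exp (p * t) - exp (q * t)) / (exp (p * t) - exp (r * t))
      = (1 - exp ((q - p) * t)) / (1 - exp ((r - p) * t)) := by
    intro t
    have hsplit : ∀ s, exp (s * t) = exp (p * t) * exp ((s - p) * t) := by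
      intro s; rw [← exp_add]; ring_nf
    rw [hsplit q, hsplit r, ← mul_one_sub, ← mul_one_sub, mul_div_mul_left _ _ (exp_ne_zero _)]
  simp_rw [hnorm]
  have hlim := ((decay q hq).const_sub 1).div ((decay r hr).const_sub 1) (by norm_num)
  rwa [sub_zero, div_one] at hlim

lemma exp_mul_mul_sub_exp (c d h t : ℝ) :
    exp (c * t) * (exp (d * t) - exp (-h * t)) = exp ((d + c) * t) - exp ((c - h) * t) := by
  rw [mul_sub, ← exp_add, ← exp_add]
  ring_nf

theorem entrant_to_incumbent_ratio_investment_driven_regime (μ h d c₀ ν₀ s₀ : ℝ)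
    (hν₀ : 0 < ν₀) (hs₀ : 0 < s₀) (hdh : 0 < d + h)
    (hreg : μ - h < d + c₀)
    (N Ω R : ℝ → ℝ)
    (hN : ∀ t, N t = (ν₀/(d+h)) * (Real.exp (d*t) - Real.exp (-h*t)))
    (hΩ : ∀ t, Ω t = ∫ u in (0:ℝ)..t,
      ν₀ * s₀ * Real.exp ((μ - h)*(t - u)) * Real.exp ((d + c₀)*u))
    (hR : ∀ t, R t = s₀ * Real.exp (c₀*t) * N t / Ω t) :
    Filter.Tendsto R Filter.atTop (nhds ((d + c₀ + h - μ)/(d + h))) := by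
  set a := d + c₀ + h - μ
  have ha : a ≠ 0 := by linarith
  have hΩ' : ∀ t, Ω t = ν₀ * s₀ / a * (exp ((d + c₀) * t) - exp ((μ - h) * t)) := by
    intro t
    simp_rw [hΩ, mul_assoc, intervalIntegral.integral_const_mul,
      integral_exp_mul_sub_mul_exp_mul hreg.ne]
    ring
  have hR' : ∀ t, R t = a / (d + h) *
      ((exp ((d + c₀) * t) - exp ((c₀ - h) * t)) / (exp ((d + c₀) * t) - exp ((μ - h) * t))) := by
    intro t
    rw [hR, hN, hΩ', ← exp_mul_mul_sub_exp, ← mul_div_mul_comm]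
    field_simp
  rw [funext hR']
  simpa using (tendsto_exp_sub_div_exp_sub (by linarith) hreg).const_mul (a / (d + h))
end
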